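/- Let T ⊆ [3k] × 𝒞 be a partial schedule and γ : 𝒞 → ℕ a profile with |T| + ‖γ‖ ≤ k/2. Then Σ_{A ∈ ℱ(T,γ)} Ẽ_T(A) = ∏_{j=1}^{6} (1/γ(C_j)!) · (k/2 − δ_T(C_j))_{γ(C_j)}. -/

import Mathlib

/-!
For `A ∈ ℱ(T,γ)` the value `Ẽ_T(A)` depends only on `γ`, so the sum is `|ℱ(T,γ)|` times
`∏ⱼ (k/2 − δ_T(C_j))_{γ_j} / (3k − |T|)_{‖γ‖}`. Placing the `‖γ‖` configurations one at a time on
the `3k − |T|` free machines gives `|ℱ(T,γ)| · ∏ⱼ γ_j! = (3k − |T|)_{‖γ‖}`, and this falling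
factorial is nonzero because `|T| + ‖γ‖ ≤ k/2 ≤ 3k`.
-/

noncomputable section
open scoped Classical

/-- `S` is a partial schedule: every machine occurs in at most one pair of `S`. -/
def IsPartialSchedule {m : ℕ} {C : Type*} (S : Finset (Fin m × C)) : Prop :=
  ∀ p ∈ S, ∀ q ∈ S, p.1 = q.1 → p = q

/-- `δ_S(c)`: the number of machines that `S` connects to configuration `c`. -/
def deltaS {m : ℕ} {C : Type*} [DecidableEq C] (S : Finset (Fin m × C)) (c : C) : ℕ :=
  (S.filter fun e => e.2 = c).card

/-- The machine set `ℳ(S)` of `S`. -/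
def machSet {m : ℕ} {C : Type*} (S : Finset (Fin m × C)) : Finset (Fin m) :=
  S.image Prod.fst

/-- Falling factorial `(x)_b = x(x−1)⋯(x−b+1)`, with `(x)_0 = 1`. -/
def ffall : ℝ → ℕ → ℝ
  | _, 0 => 1
  | x, n + 1 => x * ffall (x - 1) n

/-- The conditional pseudoexpectation value
`Ẽ_T(S) = (1/(3k − |T|)_{|S|}) · ∏_{j=1}^{6} (k/2 − δ_T(C_j))_{δ_S(C_j)}`
if `S` is a partial schedule, and `0` otherwise. -/
def pexp (k : ℕ) (T S : Finset (Fin (3 * k) × Fin 6)) : ℝ :=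
  if IsPartialSchedule S then
    (ffall ((3 * k : ℝ) - T.card) S.card)⁻¹ *
      ∏ j : Fin 6, ffall ((k : ℝ) / 2 - deltaS T j) (deltaS S j)
  else 0

/-- A profile `γ : 𝒞 → ℕ` has norm `‖γ‖ = Σ_C γ(C)`. -/
def pnorm (γ : Fin 6 → ℕ) : ℕ := ∑ c : Fin 6, γ c

/-- `ℱ(T,γ)`: partial schedules `A` with `ℳ(A) ⊆ [m] ∖ ℳ(T)` in `γ`-profile. -/
def extFam (k : ℕ) (T : Finset (Fin (3 * k) × Fin 6)) (γ : Fin 6 → ℕ) :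
    Finset (Finset (Fin (3 * k) × Fin 6)) :=
  Finset.univ.filter fun A =>
    IsPartialSchedule A ∧ Disjoint (machSet A) (machSet T) ∧ ∀ c, deltaS A c = γ c

open Finset Function

namespace IsPartialSchedule

variable {m : ℕ} {C : Type*}

lemma mono {A B : Finset (Fin m × C)} (h : A ⊆ B) (hB : IsPartialSchedule B) :
    IsPartialSchedule A :=
  fun p hp q hq => hB p (h hp) q (h hq)

lemma card_machSet {S : Finset (Fin m × C)} (hS : IsPartialSchedule S) :
    #(machSet S) = #S :=
  card_image_of_injOn fun p hp q hq => hS p hp q hq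

lemma card_compl_machSet {T : Finset (Fin m × C)} (hT : IsPartialSchedule T) :
    #(machSet T)ᶜ = m - #T := by
  rw [card_compl, Fintype.card_fin, hT.card_machSet]

end IsPartialSchedule

section Schedules

variable {m : ℕ} {C : Type*}

lemma mem_machSet {S : Finset (Fin m × C)} {i : Fin m} : i ∈ machSet S ↔ ∃ c, (i, c) ∈ S := by
  simp [machSet]

lemma machSet_mono {A B : Finset (Fin m × C)} (h : A ⊆ B) : machSet A ⊆ machSet B :=
  image_subset_image h

variable [DecidableEq C]

lemma machSet_insert (S : Finset (Fin m × C)) (e : Fin m × C) :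
    machSet (insert e S) = insert e.1 (machSet S) :=
  image_insert _ _ _

lemma IsPartialSchedule.insert {S : Finset (Fin m × C)} (hS : IsPartialSchedule S)
    {e : Fin m × C} (he : e.1 ∉ machSet S) : IsPartialSchedule (insert e S) := by
  have hfst : ∀ p ∈ S, p.1 ≠ e.1 := fun p hp h => he (h ▸ mem_image_of_mem Prod.fst hp)
  intro p hp q hq hpq
  rcases mem_insert.1 hp with hpe | hp <;> rcases mem_insert.1 hq with hqe | hq
  · exact hpe.trans hqe.symm
  · exact absurd (hpe ▸ hpq).symm (hfst q hq)
  · exact absurd (hqe ▸ hpq) (hfst p hp)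
  · exact hS p hp q hq hpq

lemma IsPartialSchedule.fst_notMem_machSet_erase {S : Finset (Fin m × C)}
    (hS : IsPartialSchedule S) {e : Fin m × C} (he : e ∈ S) : e.1 ∉ machSet (S.erase e) := by
  intro h
  obtain ⟨p, hp, hpe⟩ := mem_image.1 h
  exact (mem_erase.1 hp).1 (hS p (mem_erase.1 hp).2 e he hpe)

lemma deltaS_insert {S : Finset (Fin m × C)} {e : Fin m × C} (he : e ∉ S) :
    deltaS (insert e S) = update (deltaS S) e.2 (deltaS S e.2 + 1) := by
  ext j
  rcases eq_or_ne j e.2 with rfl | hj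
  · rw [update_self, deltaS, filter_insert, if_pos rfl,
      card_insert_of_notMem fun h => he (mem_filter.1 h).1]
    rfl
  · rw [update_of_ne hj, deltaS, filter_insert, if_neg (Ne.symm hj)]
    rfl

lemma card_eq_sum_deltaS [Fintype C] (S : Finset (Fin m × C)) : #S = ∑ c, deltaS S c :=
  card_eq_sum_card_fiberwise fun x _ => mem_univ x.2

lemma update_succ_inj {γ γ' : C → ℕ} {c : C} :
    update γ c (γ c + 1) = update γ' c (γ' c + 1) ↔ γ = γ' := by
  refine ⟨fun h => funext fun j => ?_, fun h => h ▸ rfl⟩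
  have hj := congr_fun h j
  rcases eq_or_ne j c with rfl | hne
  · simpa using hj
  · simpa [hne] using hj

variable [Fintype C]

def schedulesOn (F : Finset (Fin m)) (γ : C → ℕ) : Finset (Finset (Fin m × C)) :=
  univ.filter fun A => IsPartialSchedule A ∧ machSet A ⊆ F ∧ deltaS A = γ

variable {F : Finset (Fin m)} {γ : C → ℕ}

lemma mem_schedulesOn {A : Finset (Fin m × C)} :
    A ∈ schedulesOn F γ ↔ IsPartialSchedule A ∧ machSet A ⊆ F ∧ deltaS A = γ := by
  simp [schedulesOn]

lemma schedulesOn_zero : schedulesOn F (0 : C → ℕ) = {∅} := by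
  ext A
  rw [mem_schedulesOn, mem_singleton]
  constructor
  · rintro ⟨-, -, hδ⟩
    rw [← card_eq_zero, card_eq_sum_deltaS, hδ]
    simp
  · rintro rfl
    refine ⟨fun p hp => absurd hp (notMem_empty p), by simp [machSet], ?_⟩
    ext c
    simp [deltaS]

lemma card_sdiff_machSet_of_mem_schedulesOn {A : Finset (Fin m × C)} (hA : A ∈ schedulesOn F γ) :
    #(F \ machSet A) = #F - ∑ c, γ c := by
  obtain ⟨hps, hsub, hδ⟩ := mem_schedulesOn.1 hA
  rw [card_sdiff_of_subset hsub, hps.card_machSet, card_eq_sum_deltaS, hδ]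

lemma insert_mem_schedulesOn {A : Finset (Fin m × C)} (hA : A ∈ schedulesOn F γ)
    {i : Fin m} (hi : i ∈ F \ machSet A) (c : C) :
    insert (i, c) A ∈ schedulesOn F (update γ c (γ c + 1)) := by
  obtain ⟨hps, hsub, hδ⟩ := mem_schedulesOn.1 hA
  obtain ⟨hiF, hiA⟩ := mem_sdiff.1 hi
  refine mem_schedulesOn.2 ⟨hps.insert hiA, ?_, ?_⟩
  · rw [machSet_insert]
    exact insert_subset hiF hsub
  · rw [deltaS_insert fun h => hiA (mem_machSet.2 ⟨c, h⟩), hδ]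

lemma erase_mem_schedulesOn {A : Finset (Fin m × C)} {c : C}
    (hA : A ∈ schedulesOn F (update γ c (γ c + 1))) {e : Fin m × C} (he : e ∈ A)
    (hec : e.2 = c) : A.erase e ∈ schedulesOn F γ := by
  obtain ⟨hps, hsub, hδ⟩ := mem_schedulesOn.1 hA
  refine mem_schedulesOn.2 ⟨hps.mono (erase_subset e A),
    (machSet_mono (erase_subset e A)).trans hsub, ?_⟩
  rw [← insert_erase he, deltaS_insert (notMem_erase e A), hec] at hδ
  exact update_succ_inj.1 hδ

/-- Double counting of the pairs (schedule, one of its `c`-pairs): a schedule of profile `γ`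
extends by a `c`-pair on any of the `#F - ‖γ‖` free machines of `F`. -/
lemma card_schedulesOn_update_succ_mul (c : C) :
    #(schedulesOn F (update γ c (γ c + 1))) * (γ c + 1) =
      #(schedulesOn F γ) * (#F - ∑ j, γ j) := by
  calc #(schedulesOn F (update γ c (γ c + 1))) * (γ c + 1)
      = #((schedulesOn F (update γ c (γ c + 1))).sigma fun A => A.filter (·.2 = c)) := by
        rw [card_sigma, sum_const_nat]
        intro A hA
        exact (congr_fun (mem_schedulesOn.1 hA).2.2 c).trans (update_self _ _ _)
    _ = #((schedulesOn F γ).sigma fun A => F \ machSet A) := by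
        refine card_nbij' (fun p => ⟨p.1.erase p.2, p.2.1⟩) (fun q => ⟨insert (q.2, c) q.1, (q.2, c)⟩)
          ?_ ?_ ?_ ?_
        · rintro ⟨A, e⟩ hp
          simp only [coe_sigma, Set.mem_sigma_iff, mem_coe, mem_filter] at hp ⊢
          obtain ⟨hA, he, hec⟩ := hp
          exact ⟨erase_mem_schedulesOn hA he hec,
            mem_sdiff.2 ⟨(mem_schedulesOn.1 hA).2.1 (mem_image_of_mem _ he),
              (mem_schedulesOn.1 hA).1.fst_notMem_machSet_erase he⟩⟩
        · rintro ⟨A, i⟩ hq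
          simp only [coe_sigma, Set.mem_sigma_iff, mem_coe, mem_filter] at hq ⊢
          exact ⟨insert_mem_schedulesOn hq.1 hq.2 c, by simp⟩
        · rintro ⟨A, e⟩ hp
          simp only [coe_sigma, Set.mem_sigma_iff, mem_coe, mem_filter] at hp
          obtain ⟨-, he, rfl⟩ := hp
          simp [insert_erase he]
        · rintro ⟨A, i⟩ hq
          simp only [coe_sigma, Set.mem_sigma_iff, mem_coe, mem_sdiff] at hq
          have hiA : (i, c) ∉ A := fun h => hq.2.2 (mem_machSet.2 ⟨c, h⟩)
          simp [erase_insert hiA]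
    _ = #(schedulesOn F γ) * (#F - ∑ j, γ j) := by
        rw [card_sigma, sum_const_nat fun A hA => card_sdiff_machSet_of_mem_schedulesOn hA]

lemma exists_eq_update_succ {n : ℕ} (h : ∑ c, γ c = n + 1) :
    ∃ c γ', γ = update γ' c (γ' c + 1) ∧ ∑ j, γ' j = n := by
  obtain ⟨c, -, hc⟩ := exists_ne_zero_of_sum_ne_zero (h.trans_ne n.succ_ne_zero)
  refine ⟨c, update γ c (γ c - 1), by simp [Nat.sub_add_cancel (Nat.pos_of_ne_zero hc)], ?_⟩
  have := sum_update_of_mem (mem_univ c) γ (γ c - 1)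
  rw [← add_sum_erase _ _ (mem_univ c), ← sdiff_singleton_eq_erase] at h
  omega

theorem card_schedulesOn_mul_prod_factorial (F : Finset (Fin m)) (γ : C → ℕ) :
    #(schedulesOn F γ) * ∏ c, (γ c).factorial = (#F).descFactorial (∑ c, γ c) := by
  induction h : ∑ c, γ c generalizing γ with
  | zero =>
    obtain rfl : γ = 0 := funext fun c => (sum_eq_zero_iff.1 h) c (mem_univ c)
    simp [schedulesOn_zero]
  | succ n ih =>
    obtain ⟨c, γ, rfl, hγ⟩ := exists_eq_update_succ h
    have hprod : ∏ j, (update γ c (γ c + 1) j).factorial = (γ c + 1) * ∏ j, (γ j).factorial := by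
      rw [← comp_def, comp_update, prod_update_of_mem (mem_univ c), sdiff_singleton_eq_erase,
        Nat.factorial_succ, mul_assoc, ← mul_prod_erase univ (fun j => (γ j).factorial) (mem_univ c)]
      rfl
    rw [hprod, ← mul_assoc, card_schedulesOn_update_succ_mul, hγ, Nat.descFactorial_succ, ← ih γ hγ]
    ring

end Schedules

lemma ffall_natCast (N n : ℕ) : ffall N n = N.descFactorial n := by
  induction n generalizing N with
  | zero => simp [ffall]
  | succ n ih =>
    cases N with
    | zero => simp [ffall]
    | succ N =>
      rw [ffall, Nat.succ_descFactorial_succ, Nat.cast_succ, add_sub_cancel_right, ih]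
      push_cast
      ring

lemma extFam_eq_schedulesOn (k : ℕ) (T : Finset (Fin (3 * k) × Fin 6)) (γ : Fin 6 → ℕ) :
    extFam k T γ = schedulesOn (machSet T)ᶜ γ := by
  ext A
  simp [extFam, mem_schedulesOn, subset_compl_iff_disjoint_right, funext_iff]

lemma pexp_of_mem_extFam {k : ℕ} {T A : Finset (Fin (3 * k) × Fin 6)} {γ : Fin 6 → ℕ}
    (hA : A ∈ extFam k T γ) :
    pexp k T A = (ffall ((3 * k : ℝ) - #T) (pnorm γ))⁻¹ *
      ∏ j, ffall ((k : ℝ) / 2 - deltaS T j) (γ j) := by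
  obtain ⟨hps, -, hδ⟩ := mem_schedulesOn.1 (extFam_eq_schedulesOn k T γ ▸ hA)
  rw [pexp, if_pos hps, card_eq_sum_deltaS A, hδ]
  rfl

theorem sum_pexp_extFam_general (k : ℕ)
    (T : Finset (Fin (3 * k) × Fin 6)) (hT : IsPartialSchedule T)
    (γ : Fin 6 → ℕ)
    (hsize : (T.card : ℝ) + (pnorm γ : ℝ) ≤ (k : ℝ) / 2) :
    ∑ A ∈ extFam k T γ, pexp k T A =
      ∏ j : Fin 6, ((γ j).factorial : ℝ)⁻¹ * ffall ((k : ℝ) / 2 - deltaS T j) (γ j) := by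
  have hfits : #T + pnorm γ ≤ 3 * k := by
    have : ((#T + pnorm γ : ℕ) : ℝ) ≤ (3 * k : ℕ) := by push_cast; linarith [k.cast_nonneg (α := ℝ)]
    exact_mod_cast this
  have hfree : ((#(machSet T)ᶜ : ℕ) : ℝ) = 3 * k - #T := by
    rw [hT.card_compl_machSet, Nat.cast_sub (by omega)]
    push_cast
    ring
  have hcount : (#(extFam k T γ) : ℝ) * ∏ j, ((γ j).factorial : ℝ) =
      (#(machSet T)ᶜ).descFactorial (pnorm γ) := by
    rw [extFam_eq_schedulesOn]
    exact_mod_cast card_schedulesOn_mul_prod_factorial (machSet T)ᶜ γ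
  have hcount_ne : (#(extFam k T γ) : ℝ) * ∏ j, ((γ j).factorial : ℝ) ≠ 0 := by
    rw [hcount, Nat.cast_ne_zero, Ne, Nat.descFactorial_eq_zero_iff_lt, hT.card_compl_machSet]
    omega
  rw [sum_congr rfl fun A hA => pexp_of_mem_extFam hA, sum_const, nsmul_eq_mul, ← hfree,
    ffall_natCast, ← hcount, prod_mul_distrib, prod_inv_distrib, mul_inv, ← mul_assoc,
    ← mul_assoc, mul_inv_cancel₀ (left_ne_zero_of_mul hcount_ne), one_mul]

/-- For a partial schedule `T` and profile `γ` with `|T| + ‖γ‖ ≤ k/2`: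
`Σ_{A ∈ ℱ(T,γ)} Ẽ_T(A) = ∏_{j=1}^{6} (1/γ(C_j)!) · (k/2 − δ_T(C_j))_{γ(C_j)}`. -/
theorem sum_pexp_extFam (k : ℕ) (hk : Odd k) (hkpos : 0 < k)
    (T : Finset (Fin (3 * k) × Fin 6)) (hT : IsPartialSchedule T)
    (γ : Fin 6 → ℕ)
    (hsize : (T.card : ℝ) + (pnorm γ : ℝ) ≤ (k : ℝ) / 2) :
    ∑ A ∈ extFam k T γ, pexp k T A =
      ∏ j : Fin 6, ((γ j).factorial : ℝ)⁻¹ * ffall ((k : ℝ) / 2 - deltaS T j) (γ j) :=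
  sum_pexp_extFam_general k T hT γ hsize
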